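/- The set 𝒢 of annihilators in (V^n)* of the members of 𝒢′ is a building set: for every subspace C of (V^n)* that is a sum of members of 𝒢, one has C = G₁ ⊕ ⋯ ⊕ G_s, where G₁,…,G_s are the maximal members of 𝒢 contained in C. -/

import Mathlib

variable {G : Type*} [Group G] {V : Type*} [AddCommGroup V] [Module ℂ V]

/-- The subspace `Fix(H)` of vectors fixed by every element of the subgroup `H`
under the representation `ρ`. -/
def fixedSpace (ρ : Representation ℂ G V) (H : Subgroup G) : Submodule ℂ V where
  carrier := {v | ∀ h ∈ H, ρ h v = v}
  add_mem' := by
    intro a b ha hb h hh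
    rw [map_add, ha h hh, hb h hh]
  zero_mem' := by
    intro h hh
    exact map_zero _
  smul_mem' := by
    intro c a ha h hh
    rw [map_smul, ha h hh]

/-- A subgroup `H ≤ G` is closed (w.r.t. `ρ`) if every subgroup `K` with `H ≤ K`
and `Fix(K) = Fix(H)` satisfies `K = H`. -/
def IsClosedSubgroup (ρ : Representation ℂ G V) (H : Subgroup G) : Prop :=
  ∀ K : Subgroup G, H ≤ K → fixedSpace ρ K = fixedSpace ρ H → K = H

/-- The subspace `H^K(i₁^{g₁K},…,i_k^{g_kK})` of `V^n`: tuples `w` such that there is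
`v ∈ Fix(K)` with `w (i j) = ρ (g j) v` for all `j`. -/
def HKsub (ρ : Representation ℂ G V) {n k : ℕ} (K : Subgroup G)
    (i : Fin k → Fin n) (g : Fin k → G) : Submodule ℂ (Fin n → V) where
  carrier := {w | ∃ v, v ∈ fixedSpace ρ K ∧ ∀ j, w (i j) = ρ (g j) v}
  add_mem' := by
    rintro w₁ w₂ ⟨v₁, hv₁, h₁⟩ ⟨v₂, hv₂, h₂⟩
    exact ⟨v₁ + v₂, (fixedSpace ρ K).add_mem hv₁ hv₂, fun j => by
      simp only [Pi.add_apply, map_add, h₁ j, h₂ j]⟩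
  zero_mem' :=
    ⟨0, (fixedSpace ρ K).zero_mem, fun j => by simp⟩
  smul_mem' := by
    rintro c w ⟨v, hv, h⟩
    exact ⟨c • v, (fixedSpace ρ K).smul_mem c hv, fun j => by
      simp only [Pi.smul_apply, map_smul, h j]⟩

/-- The family 𝒢′ of subspaces `H^K(i₁^{g₁K},…,i_k^{g_kK})` of `V^n`, where `K` is a
closed subgroup of `G`, the indices are strictly increasing, and either `k ≥ 2`
or (`k = 1` and `K ≠ {e}`). -/
def GPrime (ρ : Representation ℂ G V) (n : ℕ) : Set (Submodule ℂ (Fin n → V)) :=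
  {W | ∃ (k : ℕ) (K : Subgroup G) (i : Fin (k + 1) → Fin n) (g : Fin (k + 1) → G),
        StrictMono i ∧ IsClosedSubgroup ρ K ∧ (k = 0 → K ≠ ⊥) ∧ W = HKsub ρ K i g}

/-!
Dually, `C` is the annihilator of a finite intersection `X` of members of `GPrime`, and the
maximal members of `𝒢` below `C` are the annihilators of the minimal members of `GPrime`
containing `X`. Each member of `GPrime` is cut out by a block `(K, T, c)`. Two blocks whose
supports meet, or which have disjoint supports and both a trivial fixed space, can be merged into
one block cutting out their intersection; hence a family of blocks of minimal size cutting out `X`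
has pairwise disjoint supports and at most one block with trivial fixed space. Testing with tuples
supported on one block or on one coordinate shows that every member of `GPrime` containing `X`
then contains a block of the family, and the blocks of the family are independent since each of
them together with the intersection of the others spans `V^n`.
-/

open Function

theorem sSup_eq_sSup_maximal {α : Type*} [CompleteLattice α] [WellFoundedGT α] {P S : Set α}
    (hSP : S ⊆ P) :
    sSup S = sSup {W | W ∈ P ∧ W ≤ sSup S ∧ ∀ W' ∈ P, W' ≤ sSup S → W ≤ W' → W' = W} := by
  refine le_antisymm (sSup_le fun W hW => ?_) (sSup_le fun W hW => hW.2.1)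
  obtain ⟨X, ⟨hXP, hWX, hXS⟩, hmax⟩ := wellFounded_gt.has_min
    {X | X ∈ P ∧ W ≤ X ∧ X ≤ sSup S} ⟨W, hSP hW, le_rfl, le_sSup hW⟩
  refine hWX.trans (le_sSup ⟨hXP, hXS, fun W' hW'P hW'S hXW' => ?_⟩)
  exact (eq_of_le_of_not_lt hXW' (hmax W' ⟨hW'P, hWX.trans hXW', hW'S⟩)).symm

section FixedSpace

variable (ρ : Representation ℂ G V)

lemma Representation.apply_injective (g : G) : Injective (ρ g) :=
  LeftInverse.injective (ρ.inv_self_apply g)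

lemma Representation.inv_mul_apply_eq_self_iff {g h : G} {v : V} :
    ρ (g⁻¹ * h) v = v ↔ ρ h v = ρ g v := by
  rw [map_mul, Module.End.mul_apply]
  constructor
  · intro H
    rw [← ρ.self_inv_apply g (ρ h v), H]
  · intro H
    rw [H, ρ.inv_self_apply]

lemma fixedSpace_anti {H K : Subgroup G} (h : H ≤ K) : fixedSpace ρ K ≤ fixedSpace ρ H :=
  fun _ hv g hg => hv g (h hg)

lemma fixedSpace_bot : fixedSpace ρ ⊥ = ⊤ :=
  eq_top_iff.2 fun _ _ _ hg => by rw [Subgroup.mem_bot.1 hg, map_one, Module.End.one_apply]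

lemma eq_bot_of_fixedSpace_eq_top (hfaith : Injective ρ) {K : Subgroup G}
    (h : fixedSpace ρ K = ⊤) : K = ⊥ :=
  (Subgroup.eq_bot_iff_forall K).2 fun g hg => hfaith <| by
    ext v
    rw [map_one, Module.End.one_apply]
    exact (h ▸ Submodule.mem_top : v ∈ fixedSpace ρ K) g hg

def Representation.fixingSubgroup (s : Set V) : Subgroup G where
  carrier := {g | ∀ v ∈ s, ρ g v = v}
  one_mem' _ _ := by rw [map_one, Module.End.one_apply]
  mul_mem' ha hb v hv := by rw [map_mul, Module.End.mul_apply, hb v hv, ha v hv]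
  inv_mem' {g} hg v hv := ρ.apply_injective g (by rw [ρ.self_inv_apply, hg v hv])

lemma le_fixingSubgroup_iff {K : Subgroup G} {s : Set V} :
    K ≤ ρ.fixingSubgroup s ↔ s ⊆ fixedSpace ρ K :=
  ⟨fun h _ hv _ hg => h hg _ hv, fun h _ hg _ hv => h hv _ hg⟩

lemma mem_fixedSpace_closure {S : Set G} {v : V} :
    v ∈ fixedSpace ρ (Subgroup.closure S) ↔ ∀ g ∈ S, ρ g v = v := by
  rw [← SetLike.mem_coe, ← Set.singleton_subset_iff, ← le_fixingSubgroup_iff, Subgroup.closure_le]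
  simp [Set.subset_def, Representation.fixingSubgroup]

lemma fixedSpace_fixingSubgroup_fixedSpace (K : Subgroup G) :
    fixedSpace ρ (ρ.fixingSubgroup (fixedSpace ρ K)) = fixedSpace ρ K :=
  le_antisymm (fixedSpace_anti ρ ((le_fixingSubgroup_iff ρ).2 le_rfl))
    ((le_fixingSubgroup_iff ρ).1 le_rfl)

lemma isClosedSubgroup_fixingSubgroup (s : Set V) :
    IsClosedSubgroup ρ (ρ.fixingSubgroup s) := by
  intro K hle hK
  refine le_antisymm ((le_fixingSubgroup_iff ρ).2 ?_) hle
  rw [hK]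
  exact (le_fixingSubgroup_iff ρ).1 le_rfl

end FixedSpace

/-- The data `(K, T, c)` of the subspace `H^K(t^{c(t)K} : t ∈ T)`; only `c` on `T` matters. -/
structure Block (G : Type*) [Group G] (n : ℕ) where
  K : Subgroup G
  T : Finset (Fin n)
  c : Fin n → G

namespace Block

variable (ρ : Representation ℂ G V) {n : ℕ}

def space (b : Block G n) : Submodule ℂ (Fin n → V) :=
  ((fixedSpace ρ b.K).map (LinearMap.pi fun t : b.T => ρ (b.c t))).comap
    (LinearMap.funLeft ℂ V ((↑) : b.T → Fin n))

def embed (b : Block G n) (v : V) : Fin n → V :=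
  fun t => if t ∈ b.T then ρ (b.c t) v else 0

/-- Blocks with disjoint supports impose independent conditions, except that two blocks with
trivial fixed space should be merged into one. -/
def Compatible (b x : Block G n) : Prop :=
  Disjoint b.T x.T ∧ ¬(fixedSpace ρ b.K = ⊥ ∧ fixedSpace ρ x.K = ⊥)

def IsProper (b : Block G n) : Prop :=
  b.T.Nonempty ∧ (b.T.card = 1 → fixedSpace ρ b.K ≠ ⊤)

def IsGood (B : Finset (Block G n)) : Prop :=
  (∀ b ∈ B, IsProper ρ b) ∧ (B : Set (Block G n)).Pairwise (Compatible ρ)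

/-- Gluing `b` and `x` along a common index, where `h` carries the parameter of `b` to that
of `x`. -/
def glue (b x : Block G n) (h : G) : Block G n where
  K := Subgroup.closure ((b.K : Set G) ∪ (fun k => h⁻¹ * (k * h)) '' x.K ∪
    (fun t => (b.c t)⁻¹ * (x.c t * h)) '' ↑(b.T ∩ x.T))
  T := b.T ∪ x.T
  c t := if t ∈ b.T then b.c t else x.c t * h

variable {ρ}

lemma mem_space {b : Block G n} {w : Fin n → V} :
    w ∈ space ρ b ↔ ∃ v ∈ fixedSpace ρ b.K, ∀ t ∈ b.T, w t = ρ (b.c t) v := by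
  simp [space, funext_iff, eq_comm]

lemma mem_space_of_forall_eq_zero {b : Block G n} {w : Fin n → V} (hw : ∀ t ∈ b.T, w t = 0) :
    w ∈ space ρ b :=
  mem_space.2 ⟨0, zero_mem _, fun t ht => by rw [hw t ht, map_zero]⟩

lemma mem_space_of_eqOn {b : Block G n} {w w' : Fin n → V} (hw : w ∈ space ρ b)
    (h : ∀ t ∈ b.T, w t = w' t) : w' ∈ space ρ b := by
  obtain ⟨v, hv, hwv⟩ := mem_space.1 hw
  exact mem_space.2 ⟨v, hv, fun t ht => by rw [← h t ht, hwv t ht]⟩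

lemma eq_zero_of_mem_space {b : Block G n} {w : Fin n → V} (hw : w ∈ space ρ b) {s t : Fin n}
    (hs : s ∈ b.T) (hs0 : w s = 0) (ht : t ∈ b.T) : w t = 0 := by
  obtain ⟨v, -, hwv⟩ := mem_space.1 hw
  have hv : v = 0 := (map_eq_zero_iff _ (ρ.apply_injective _)).1 (hwv s hs ▸ hs0)
  rw [hwv t ht, hv, map_zero]

lemma mem_space_iff_of_fixedSpace_eq_bot {b : Block G n} (hb : fixedSpace ρ b.K = ⊥)
    {w : Fin n → V} : w ∈ space ρ b ↔ ∀ t ∈ b.T, w t = 0 := by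
  simp [mem_space, hb]

lemma mem_fixedSpace_glue {b x : Block G n} {h : G} {v : V} :
    v ∈ fixedSpace ρ (glue b x h).K ↔ v ∈ fixedSpace ρ b.K ∧ ρ h v ∈ fixedSpace ρ x.K ∧
      ∀ t ∈ b.T ∩ x.T, ρ (x.c t) (ρ h v) = ρ (b.c t) v := by
  simp only [glue, mem_fixedSpace_closure, Set.mem_union, or_imp, forall_and,
    Set.forall_mem_image, SetLike.mem_coe, Representation.inv_mul_apply_eq_self_iff]
  simp only [map_mul, Module.End.mul_apply, and_assoc]
  rfl

lemma space_glue {b x : Block G n} {t₀ : Fin n} (hb : t₀ ∈ b.T) (hx : t₀ ∈ x.T) :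
    space ρ (glue b x ((x.c t₀)⁻¹ * b.c t₀)) = space ρ b ⊓ space ρ x := by
  set h := (x.c t₀)⁻¹ * b.c t₀
  ext w
  simp only [Submodule.mem_inf, mem_space, mem_fixedSpace_glue]
  constructor
  · rintro ⟨v, ⟨hvb, hvx, hbx⟩, hw⟩
    refine ⟨⟨v, hvb, fun t ht => ?_⟩, ⟨ρ h v, hvx, fun t ht => ?_⟩⟩
    · simpa [glue, ht] using hw t (Finset.mem_union_left _ ht)
    · by_cases htb : t ∈ b.T
      · simpa [glue, htb, hbx t (Finset.mem_inter.2 ⟨htb, ht⟩)] using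
          hw t (Finset.mem_union_left _ htb)
      · simpa [glue, htb] using hw t (Finset.mem_union_right _ ht)
  · rintro ⟨⟨v, hvb, hwb⟩, ⟨u, hu, hwx⟩⟩
    have hvu : ρ h v = u := by
      rw [map_mul, Module.End.mul_apply, ← hwb t₀ hb, hwx t₀ hx, ρ.inv_self_apply]
    refine ⟨v, ⟨hvb, hvu ▸ hu, fun t ht => ?_⟩, fun t ht => ?_⟩
    · rw [hvu, ← hwx t (Finset.mem_inter.1 ht).2, hwb t (Finset.mem_inter.1 ht).1]
    · by_cases htb : t ∈ b.T
      · simpa [glue, htb] using hwb t htb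
      · have htx : t ∈ x.T := by simpa [glue, htb] using ht
        simpa [glue, htb, hvu] using hwx t htx

lemma exists_isProper_space_eq_inf [Nontrivial V] (hfix : fixedSpace ρ ⊤ = ⊥)
    {b x : Block G n} (hb : IsProper ρ b) (hbx : ¬Compatible ρ b x) :
    ∃ y, IsProper ρ y ∧ space ρ y = space ρ b ⊓ space ρ x := by
  by_cases hT : Disjoint b.T x.T
  · obtain ⟨hbK, hxK⟩ : fixedSpace ρ b.K = ⊥ ∧ fixedSpace ρ x.K = ⊥ := by
      simpa [Compatible, hT] using hbx
    refine ⟨⟨⊤, b.T ∪ x.T, 1⟩, ⟨hb.1.mono Finset.subset_union_left, fun _ => ?_⟩, ?_⟩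
    · rw [hfix]
      exact bot_ne_top
    · ext w
      simp only [Submodule.mem_inf, mem_space_iff_of_fixedSpace_eq_bot (b := ⟨⊤, _, _⟩) hfix,
        mem_space_iff_of_fixedSpace_eq_bot hbK, mem_space_iff_of_fixedSpace_eq_bot hxK,
        Finset.mem_union, or_imp, forall_and]
  · obtain ⟨t₀, htb, htx⟩ := Finset.not_disjoint_iff.1 hT
    refine ⟨glue b x ((x.c t₀)⁻¹ * b.c t₀), ⟨hb.1.mono Finset.subset_union_left, ?_⟩,
      space_glue htb htx⟩
    intro hcard
    have hbcard : b.T.card = 1 :=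
      le_antisymm (hcard ▸ Finset.card_le_card Finset.subset_union_left) hb.1.card_pos
    exact ne_top_of_le_ne_top (hb.2 hbcard)
      (fixedSpace_anti ρ fun g hg => Subgroup.subset_closure (Or.inl (Or.inl hg)))

lemma exists_isGood [Nontrivial V] (hfix : fixedSpace ρ ⊤ = ⊥) {B : Finset (Block G n)}
    (hB : ∀ b ∈ B, IsProper ρ b) :
    ∃ B' : Finset (Block G n), IsGood ρ B' ∧ B'.inf (space ρ) = B.inf (space ρ) := by
  classical
  obtain ⟨B', ⟨hB'proper, hB'inf⟩, hmin⟩ := (measure Finset.card).wf.has_min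
    {B' | (∀ b ∈ B', IsProper ρ b) ∧ B'.inf (space ρ) = B.inf (space ρ)} ⟨B, hB, rfl⟩
  refine ⟨B', ⟨hB'proper, fun b hb x hx hne => by_contra fun hbx => ?_⟩, hB'inf⟩
  obtain ⟨y, hy, hyspace⟩ := exists_isProper_space_eq_inf hfix (hB'proper b hb) hbx
  have hxb : x ∈ B'.erase b := Finset.mem_erase.2 ⟨hne.symm, hx⟩
  set R := (B'.erase b).erase x
  -- replacing `b` and `x` by their merge `y` keeps the intersection and lowers the cardinality
  refine hmin (insert y R) ⟨?_, ?_⟩ ?_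
  · simp only [Finset.mem_insert, forall_eq_or_imp, R, Finset.mem_erase]
    exact ⟨hy, fun z hz => hB'proper z hz.2.2⟩
  · rw [Finset.inf_insert, hyspace, ← hB'inf, ← Finset.insert_erase hb,
      ← Finset.insert_erase hxb, Finset.inf_insert, Finset.inf_insert, inf_assoc]
  · have hR : R.card + 1 = (B'.erase b).card := Finset.card_erase_add_one hxb
    have hB' := Finset.card_erase_add_one hb
    calc (insert y R).card ≤ R.card + 1 := Finset.card_insert_le _ _
      _ < B'.card := by omega

lemma embed_apply_of_mem {b : Block G n} {v : V} {t : Fin n} (ht : t ∈ b.T) :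
    embed ρ b v t = ρ (b.c t) v :=
  if_pos ht

lemma embed_apply_of_notMem {b : Block G n} {v : V} {t : Fin n} (ht : t ∉ b.T) :
    embed ρ b v t = 0 :=
  if_neg ht

lemma embed_mem_finsetInf {B : Finset (Block G n)}
    (hB : (B : Set (Block G n)).Pairwise (Disjoint on Block.T)) {r : Block G n} (hr : r ∈ B)
    {v : V} (hv : v ∈ fixedSpace ρ r.K) : embed ρ r v ∈ B.inf (space ρ) := by
  refine Submodule.mem_finsetInf.2 fun s hs => ?_
  obtain rfl | hsr := eq_or_ne s r
  · exact mem_space.2 ⟨v, hv, fun t ht => embed_apply_of_mem ht⟩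
  · exact mem_space_of_forall_eq_zero fun t ht =>
      embed_apply_of_notMem (Finset.disjoint_left.1 (hB hs hr hsr) ht)

lemma single_mem_finsetInf {B : Finset (Block G n)} {t : Fin n} (ht : ∀ r ∈ B, t ∉ r.T)
    (v : V) : Pi.single t v ∈ B.inf (space ρ) :=
  Submodule.mem_finsetInf.2 fun r hr => mem_space_of_forall_eq_zero fun _ hs =>
    Pi.single_eq_of_ne (M := fun _ => V) (ne_of_mem_of_not_mem hs (ht r hr)) v

lemma exists_single_notMem_space [Nontrivial V] {b : Block G n} (hb : IsProper ρ b) {t : Fin n}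
    (ht : t ∈ b.T) : ∃ v, Pi.single t v ∉ space ρ b := by
  by_cases hcard : b.T.card = 1
  · -- a single coordinate is constrained to `ρ (c t) Fix(K) ≠ V`
    obtain ⟨u, hu⟩ := SetLike.exists_not_mem_of_ne_top _ (hb.2 hcard)
    refine ⟨ρ (b.c t) u, fun hmem => hu ?_⟩
    obtain ⟨v, hv, hwv⟩ := mem_space.1 hmem
    have huv : u = v := ρ.apply_injective _ (by simpa using hwv t ht)
    rwa [huv]
  · -- with two coordinates, one nonzero entry forces the other to be nonzero as well
    obtain ⟨s, hs, hst⟩ := Finset.exists_mem_ne (lt_of_le_of_ne hb.1.card_pos (Ne.symm hcard)) t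
    obtain ⟨u, hu⟩ := exists_ne (0 : V)
    exact ⟨u, fun hmem => hu (by
      simpa using eq_zero_of_mem_space hmem hs (Pi.single_eq_of_ne (M := fun _ => V) hst u) ht)⟩

lemma notMem_of_finsetInf_le_space {B : Finset (Block G n)}
    (hB : (B : Set (Block G n)).Pairwise (Disjoint on Block.T)) {b : Block G n}
    (hle : B.inf (space ρ) ≤ space ρ b) {r r' : Block G n} (hr : r ∈ B) (hr' : r' ∈ B)
    (hne : r ≠ r') (hfix : fixedSpace ρ r.K ≠ ⊥) {s : Fin n} (hs : s ∈ b.T) (hsr : s ∈ r.T)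
    {s' : Fin n} (hs' : s' ∈ b.T) : s' ∉ r'.T := by
  intro hs'r'
  obtain ⟨v, hv, hv0⟩ := (Submodule.ne_bot_iff _).1 hfix
  have hmem := hle (embed_mem_finsetInf hB hr hv)
  have h0 := eq_zero_of_mem_space hmem hs'
    (embed_apply_of_notMem (Finset.disjoint_right.1 (hB hr hr' hne) hs'r')) hs
  rw [embed_apply_of_mem hsr] at h0
  exact hv0 ((map_eq_zero_iff _ (ρ.apply_injective _)).1 h0)

lemma exists_space_le_of_finsetInf_le [Nontrivial V] {B : Finset (Block G n)}
    (hB : (B : Set (Block G n)).Pairwise (Compatible ρ)) {b : Block G n} (hb : IsProper ρ b)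
    (hle : B.inf (space ρ) ≤ space ρ b) : ∃ r ∈ B, space ρ r ≤ space ρ b := by
  have hdisj : (B : Set (Block G n)).Pairwise (Disjoint on Block.T) := hB.mono' fun _ _ h => h.1
  have hcover : ∀ t ∈ b.T, ∃ r ∈ B, t ∈ r.T := by
    intro t ht
    by_contra! hfree
    obtain ⟨v, hv⟩ := exists_single_notMem_space hb ht
    exact hv (hle (single_mem_finsetInf hfree v))
  obtain ⟨t₁, ht₁⟩ := hb.1
  obtain ⟨r, hr, ht₁r⟩ := hcover t₁ ht₁
  have hsub : ∀ t ∈ b.T, t ∈ r.T := by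
    intro t ht
    obtain ⟨r', hr', htr'⟩ := hcover t ht
    by_contra htr
    have hne : r ≠ r' := by
      rintro rfl
      exact htr htr'
    rcases not_and_or.1 (hB hr hr' hne).2 with hfix | hfix
    · exact notMem_of_finsetInf_le_space hdisj hle hr hr' hne hfix ht₁ ht₁r ht htr'
    · exact notMem_of_finsetInf_le_space hdisj hle hr' hr hne.symm hfix ht htr' ht₁ ht₁r
  refine ⟨r, hr, fun w hw => ?_⟩
  obtain ⟨v, hv, hwv⟩ := mem_space.1 hw
  refine mem_space_of_eqOn (hle (embed_mem_finsetInf hdisj hr hv)) fun t ht => ?_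
  rw [embed_apply_of_mem (hsub t ht), hwv t (hsub t ht)]

lemma space_sup_finsetInf_erase_eq_top [DecidableEq (Block G n)] {B : Finset (Block G n)}
    (hB : (B : Set (Block G n)).Pairwise (Disjoint on Block.T)) {r : Block G n} (hr : r ∈ B) :
    space ρ r ⊔ (B.erase r).inf (space ρ) = ⊤ := by
  refine eq_top_iff.2 fun w _ => ?_
  have hw : w = (fun t => if t ∈ r.T then 0 else w t) + fun t => if t ∈ r.T then w t else 0 := by
    ext t
    simp only [Pi.add_apply]
    split_ifs <;> simp
  rw [hw]
  refine Submodule.add_mem_sup (mem_space_of_forall_eq_zero fun t ht => if_pos ht)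
    (Submodule.mem_finsetInf.2 fun s hs => mem_space_of_forall_eq_zero fun t ht => if_neg ?_)
  exact Finset.disjoint_right.1
    (hB hr (Finset.mem_of_mem_erase hs) (Finset.ne_of_mem_erase hs).symm) ht

variable (ρ) in
lemma sSupIndep_image_dualAnnihilator_space {B : Finset (Block G n)}
    (hB : (B : Set (Block G n)).Pairwise (Disjoint on Block.T)) :
    sSupIndep ((fun r => (space ρ r).dualAnnihilator) '' (B : Set (Block G n))) := by
  classical
  rintro _ ⟨r, hr, rfl⟩
  have hdisj :
      Disjoint (space ρ r).dualAnnihilator ((B.erase r).inf (space ρ)).dualAnnihilator := by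
    rw [disjoint_iff, ← Submodule.dualAnnihilator_sup_eq,
      space_sup_finsetInf_erase_eq_top hB hr, Submodule.dualAnnihilator_top]
  refine hdisj.mono_right (sSup_le ?_)
  rintro _ ⟨⟨s, hs, rfl⟩, hsr⟩
  have hne : s ≠ r := by
    rintro rfl
    exact hsr rfl
  exact Submodule.dualAnnihilator_anti (Finset.inf_le (Finset.mem_erase.2 ⟨hne, hs⟩))

lemma space_eq_HKsub {k : ℕ} (b : Block G n) (i : Fin k → Fin n)
    (hT : b.T = Finset.univ.image i) : space ρ b = HKsub ρ b.K i (b.c ∘ i) := by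
  ext w
  simp [mem_space, HKsub, hT]

lemma exists_isProper_space_eq (hfaith : Injective ρ) {A : Submodule ℂ (Fin n → V)}
    (hA : A ∈ GPrime ρ n) : ∃ b : Block G n, IsProper ρ b ∧ space ρ b = A := by
  obtain ⟨k, K, i, g, hi, -, hK, rfl⟩ := hA
  let b : Block G n := ⟨K, Finset.univ.image i, extend i g 1⟩
  have hcard : b.T.card = k + 1 := by
    simp [b, Finset.card_image_of_injective _ hi.injective]
  refine ⟨b, ⟨Finset.univ_nonempty.image i, fun h1 hKtop => ?_⟩, ?_⟩
  · exact hK (by omega) (eq_bot_of_fixedSpace_eq_top ρ hfaith hKtop)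
  · rw [space_eq_HKsub b i rfl]
    congr 1
    funext j
    exact hi.injective.extend_apply g 1 j

lemma space_mem_GPrime {b : Block G n} (hb : IsProper ρ b) : space ρ b ∈ GPrime ρ n := by
  obtain ⟨k, hk⟩ : ∃ k, b.T.card = k + 1 := Nat.exists_eq_succ_of_ne_zero hb.1.card_pos.ne'
  let i := b.T.orderEmbOfFin hk
  -- replace `b.K` by the closed subgroup with the same fixed space
  let K := ρ.fixingSubgroup (fixedSpace ρ b.K)
  have hK : fixedSpace ρ K = fixedSpace ρ b.K := fixedSpace_fixingSubgroup_fixedSpace ρ b.K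
  have hT : b.T = Finset.univ.image i := by
    apply Finset.coe_injective
    simp [i]
  refine ⟨k, K, i, b.c ∘ i, i.strictMono, isClosedSubgroup_fixingSubgroup ρ _,
    fun hk0 hKbot => hb.2 (by omega) ?_, ?_⟩
  · rw [← hK, hKbot, fixedSpace_bot]
  · calc space ρ b = space ρ ⟨K, b.T, b.c⟩ := by simp only [space, hK]
      _ = HKsub ρ K i (b.c ∘ i) := space_eq_HKsub _ i hT

lemma exists_finset_isProper_of_subset (hfaith : Injective ρ)
    {F : Finset (Submodule ℂ (Module.Dual ℂ (Fin n → V)))}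
    (hF : ↑F ⊆ Submodule.dualAnnihilator '' GPrime ρ n) :
    ∃ B : Finset (Block G n), (∀ b ∈ B, IsProper ρ b) ∧
      F.sup id = (B.inf (space ρ)).dualAnnihilator := by
  classical
  induction F using Finset.induction_on with
  | empty => exact ⟨∅, by simp, by simp⟩
  | insert W F _ ih =>
    rw [Finset.coe_insert, Set.insert_subset_iff] at hF
    obtain ⟨A, hA, rfl⟩ := hF.1
    obtain ⟨b, hb, rfl⟩ := exists_isProper_space_eq hfaith hA
    obtain ⟨B, hB, hFB⟩ := ih hF.2
    refine ⟨insert b B, Finset.forall_mem_insert _ _ _ |>.2 ⟨hb, hB⟩, ?_⟩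
    rw [Finset.sup_insert, Finset.inf_insert, Subspace.dualAnnihilator_inf_eq, hFB, id]

lemma exists_eq_dualAnnihilator_of_maximal [Nontrivial V] (hfaith : Injective ρ)
    {B : Finset (Block G n)} (hB : IsGood ρ B) {a : Submodule ℂ (Module.Dual ℂ (Fin n → V))}
    (haG : a ∈ Submodule.dualAnnihilator '' GPrime ρ n)
    (haB : a ≤ (B.inf (space ρ)).dualAnnihilator)
    (hmax : ∀ W ∈ Submodule.dualAnnihilator '' GPrime ρ n,
      W ≤ (B.inf (space ρ)).dualAnnihilator → a ≤ W → W = a) :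
    ∃ r ∈ B, a = (space ρ r).dualAnnihilator := by
  obtain ⟨A, hA, rfl⟩ := haG
  obtain ⟨b, hb, rfl⟩ := exists_isProper_space_eq hfaith hA
  obtain ⟨r, hr, hrb⟩ := exists_space_le_of_finsetInf_le hB.2 hb
    (Subspace.dualAnnihilator_le_dualAnnihilator_iff.1 haB)
  exact ⟨r, hr, (hmax _ ⟨_, space_mem_GPrime (hB.1 r hr), rfl⟩
    (Submodule.dualAnnihilator_anti (Finset.inf_le hr)) (Submodule.dualAnnihilator_anti hrb)).symm⟩

end Block

theorem GSet_isBuilding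
    [FiniteDimensional ℂ V] (ρ : Representation ℂ G V)
    (hfaith : Function.Injective ρ) (hfix : fixedSpace ρ ⊤ = ⊥) (n : ℕ) :
    ∀ C : Submodule ℂ (Module.Dual ℂ (Fin n → V)),
      (∃ S : Set (Submodule ℂ (Module.Dual ℂ (Fin n → V))),
          S ⊆ Submodule.dualAnnihilator '' GPrime ρ n ∧ S.Nonempty ∧ C = sSup S) →
      C = sSup {W | W ∈ Submodule.dualAnnihilator '' GPrime ρ n ∧ W ≤ C ∧
            ∀ W' ∈ Submodule.dualAnnihilator '' GPrime ρ n, W' ≤ C → W ≤ W' → W' = W} ∧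
      sSupIndep
        {W | W ∈ Submodule.dualAnnihilator '' GPrime ρ n ∧ W ≤ C ∧
            ∀ W' ∈ Submodule.dualAnnihilator '' GPrime ρ n, W' ≤ C → W ≤ W' → W' = W} := by
  rintro C ⟨S, hSG, -, rfl⟩
  refine ⟨sSup_eq_sSup_maximal hSG, ?_⟩
  rcases subsingleton_or_nontrivial V with hV | hV
  · intro a _
    simp [Submodule.eq_bot_of_subsingleton (p := a)]
  obtain ⟨F, hFS, hSF⟩ := CompleteLattice.WellFoundedGT.isSupFiniteCompact _ S
  obtain ⟨B, hB, hFB⟩ := Block.exists_finset_isProper_of_subset hfaith (hFS.trans hSG)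
  obtain ⟨B', hB', hBB'⟩ := Block.exists_isGood hfix hB
  rw [hSF, hFB, ← hBB']
  refine (Block.sSupIndep_image_dualAnnihilator_space ρ (hB'.2.mono' fun _ _ h => h.1)).mono ?_
  rintro a ⟨haG, haB, hmax⟩
  obtain ⟨r, hr, rfl⟩ := Block.exists_eq_dualAnnihilator_of_maximal hfaith hB' haG haB hmax
  exact ⟨r, hr, rfl⟩
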